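/- Let V be a finite-dimensional real vector space, let X ∈ End(V) be diagonalizable with eigenvalue decomposition V = V_1 ⊕ ... ⊕ V_k (V_j the eigenspace for eigenvalue λ_j), with projections π_j: V → V_j. Call vectors w_1,...,w_s ∈ V_j thick if s > dim V_j and every dim V_j of them are linearly independent; call v_1,...,v_s ∈ V thick if each collection π_j(v_1),...,π_j(v_s) is thick in V_j. Let G ≤ GL(V) be a subgroup commuting with X. If v_1,...,v_s is thick and g ∈ G satisfies g v_i = e^{t_i X} v_i for some real numbers t_1,...,t_s, then g = e^{tX} for some t ∈ ℝ. -/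

import Mathlib

/-!
On each eigenspace `V_j` of `X`, the map `g` acts on `π_j v_i` by the scalar `e^{t_i λ_j}`.
Thickness forces these scalars to agree: given `i ≠ i'`, complete `i` by `dim V_j - 1` further
indices to a basis of `V_j` avoiding `i'`; then `g - e^{t_i λ_j}` maps `π_j v_{i'}` into the span
of those further vectors, which does not contain it unless the two scalars coincide. Hence `g`
acts on every `V_j` by `e^{t λ_j}` for a single `t`, i.e. `g = e^{tX}`.
-/

open Matrix Module

section LinearAlgebra

variable {K M ι : Type*} [Field K] [AddCommGroup M] [Module K M] [Fintype ι]

structure IsThick (W : Submodule K M) (w : ι → M) : Prop where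
  finrank_lt_card : finrank K W < Fintype.card ι
  mem : ∀ i, w i ∈ W
  linearIndepOn : ∀ I : Finset ι, I.card = finrank K W → LinearIndepOn K w I

namespace IsThick

variable {W : Submodule K M} {w : ι → M} [FiniteDimensional K W]

theorem span_image_eq (hw : IsThick W w) {I : Finset ι} (hI : I.card = finrank K W) :
    Submodule.span K (w '' I) = W := by
  refine Submodule.eq_of_le_of_finrank_le
    (Submodule.span_le.mpr (Set.image_subset_iff.mpr fun i _ => hw.mem i)) ?_
  rw [Set.image_eq_range, finrank_span_eq_card (hw.linearIndepOn I hI)]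
  simp [hI]

theorem eigenvalue_eq (hw : IsThick W w) (hW : 0 < finrank K W) {f : End K M} {c : ι → K}
    (hf : ∀ i, f (w i) = c i • w i) (i i' : ι) : c i = c i' := by
  classical
  by_contra hne
  have hii' : i ≠ i' := fun h => hne (congrArg c h)
  obtain ⟨S, hS, hScard⟩ := Finset.exists_subset_card_eq
    (s := (Finset.univ.erase i).erase i') (n := finrank K W - 1) (by
      have := hw.finrank_lt_card
      rw [Finset.card_erase_of_mem (by simpa using hii'.symm),
        Finset.card_erase_of_mem (Finset.mem_univ i), Finset.card_univ]
      omega)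
  have hiS : i ∉ S := fun h => by simpa using hS h
  have hi'S : i' ∉ S := fun h => by simpa using hS h
  have card_insert : ∀ x ∉ S, (insert x S).card = finrank K W := fun x hx => by
    rw [Finset.card_insert_of_notMem hx, hScard]; omega
  set U := Submodule.span K (w '' S)
  have hmem : w i' ∈ Submodule.span K (insert (w i) (w '' S)) := by
    rw [← Set.image_insert_eq, ← Finset.coe_insert, hw.span_image_eq (card_insert i hiS)]
    exact hw.mem i'
  obtain ⟨a, z, hz, hi'⟩ := Submodule.mem_span_insert.mp hmem
  have hfU : U ≤ U.comap f := Submodule.span_le.mpr <| by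
    rintro _ ⟨x, hx, rfl⟩
    simpa [hf] using U.smul_mem (c x) (Submodule.subset_span ⟨x, hx, rfl⟩)
  -- `f - c i` kills the `w i`-component of `w i'`, so it maps `w i'` into `U`
  have hsmul : (c i' - c i) • w i' ∈ U := by
    have : (c i' - c i) • w i' = f z - c i • z := by
      rw [sub_smul, ← hf, hi', map_add, map_smul, hf]
      module
    rw [this]
    exact U.sub_mem (hfU hz) (U.smul_mem _ hz)
  have hnot := ((linearIndepOn_insert hi'S).mp (by
    simpa using hw.linearIndepOn _ (card_insert i' hi'S))).2
  exact hnot ((Submodule.smul_mem_iff _ (sub_ne_zero.mpr (Ne.symm hne))).mp hsmul)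

theorem le_eigenspace (hw : IsThick W w) {f : End K M} {c : ι → K}
    (hf : ∀ i, f (w i) = c i • w i) (i : ι) : W ≤ f.eigenspace (c i) := by
  rcases (finrank K W).eq_zero_or_pos with h0 | hpos
  · rw [Submodule.finrank_eq_zero.mp h0]
    exact bot_le
  obtain ⟨I, -, hI⟩ := Finset.exists_subset_card_eq (s := Finset.univ) (n := finrank K W)
    (by simpa using hw.finrank_lt_card.le)
  rw [← hw.span_image_eq hI, Submodule.span_le]
  rintro _ ⟨x, -, rfl⟩
  rw [SetLike.mem_coe, Module.End.mem_eigenspace_iff, hf, hw.eigenvalue_eq hpos hf x i]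

end IsThick

structure IsEigenDecomposition (X : End K M) (lam : ι → K) (π : ι → End K M) : Prop where
  injective : Function.Injective lam
  sum_apply : ∀ v, ∑ j, π j v = v
  apply_proj : ∀ j v, X (π j v) = lam j • π j v
  proj_proj_of_ne : ∀ j l, j ≠ l → ∀ v, π j (π l v) = 0

namespace IsEigenDecomposition

variable {X : End K M} {lam : ι → K} {π : ι → End K M}

theorem proj_proj (hX : IsEigenDecomposition X lam π) (j : ι) (v : M) : π j (π j v) = π j v := by
  classical
  have h := hX.sum_apply (π j v)
  rwa [Finset.sum_eq_single j (fun l _ hl => hX.proj_proj_of_ne l j hl v) (by simp)] at h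

theorem proj_apply (hX : IsEigenDecomposition X lam π) (j : ι) (v : M) :
    π j (X v) = lam j • π j v := by
  classical
  conv_lhs => rw [← hX.sum_apply v]
  simp only [map_sum, hX.apply_proj, map_smul]
  rw [Finset.sum_eq_single j (fun l _ hl => by rw [hX.proj_proj_of_ne j l (Ne.symm hl), smul_zero])
    (by simp), hX.proj_proj]

theorem proj_eq_zero_of_apply_eq_smul (hX : IsEigenDecomposition X lam π) {l : ι} {u : M}
    (hu : X u = lam l • u) {j : ι} (hj : j ≠ l) : π j u = 0 := by
  have h : (lam j - lam l) • π j u = 0 := by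
    rw [sub_smul, ← hX.proj_apply, hu, map_smul, sub_self]
  exact (smul_eq_zero.mp h).resolve_left (sub_ne_zero.mpr (hX.injective.ne hj))

theorem proj_eq_self_of_apply_eq_smul (hX : IsEigenDecomposition X lam π) {l : ι} {u : M}
    (hu : X u = lam l • u) : π l u = u := by
  classical
  have h := hX.sum_apply u
  rwa [Finset.sum_eq_single l (fun j _ hj => hX.proj_eq_zero_of_apply_eq_smul hu hj)
    (by simp)] at h

theorem proj_apply_of_commute (hX : IsEigenDecomposition X lam π) {A : End K M}
    (hA : Commute A X) (j : ι) (v : M) : π j (A v) = A (π j v) := by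
  classical
  have hAπ : ∀ l, X (A (π l v)) = lam l • A (π l v) := fun l => by
    rw [← Module.End.mul_apply, ← hA.eq, Module.End.mul_apply, hX.apply_proj, map_smul]
  conv_lhs => rw [← hX.sum_apply v]
  rw [map_sum, map_sum, Finset.sum_eq_single j
    (fun l _ hl => hX.proj_eq_zero_of_apply_eq_smul (hAπ l) (Ne.symm hl)) (by simp),
    hX.proj_eq_self_of_apply_eq_smul (hAπ j)]

theorem ext (hX : IsEigenDecomposition X lam π) {A B : End K M}
    (h : ∀ j v, A (π j v) = B (π j v)) : A = B := by
  ext v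
  rw [← hX.sum_apply v, map_sum, map_sum]
  exact Finset.sum_congr rfl fun j _ => h j v

end IsEigenDecomposition

end LinearAlgebra

section MatrixExp

attribute [local instance] Matrix.linftyOpNormedRing Matrix.linftyOpNormedAlgebra

theorem Matrix.exp_mulVec_of_mulVec_eq_smul {m : Type*} [Fintype m] [DecidableEq m]
    {A : Matrix m m ℝ} {w : m → ℝ} {μ : ℝ} (h : A *ᵥ w = μ • w) :
    NormedSpace.exp A *ᵥ w = Real.exp μ • w := by
  have hpow : ∀ k : ℕ, A ^ k *ᵥ w = μ ^ k • w := fun k => by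
    induction k with
    | zero => simp
    | succ k ih => rw [pow_succ', ← mulVec_mulVec, ih, mulVec_smul, h, smul_smul, pow_succ]
  have hA := (NormedSpace.exp_series_hasSum_exp' (𝕂 := ℝ) A).map
    (Matrix.mulVec.addMonoidHomLeft w) (continuous_id.matrix_mulVec continuous_const)
  have hμ := (NormedSpace.exp_series_hasSum_exp' (𝕂 := ℝ) μ).smul_const w
  rw [← Real.exp_eq_exp_ℝ] at hμ
  refine hA.unique (hμ.congr_fun fun k => ?_)
  simp [Matrix.mulVec.addMonoidHomLeft, smul_mulVec, hpow, smul_smul]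

end MatrixExp

theorem stmt11_general (n k s : ℕ) (X : Matrix (Fin n) (Fin n) ℝ)
    (lam : Fin k → ℝ) (hinj : Function.Injective lam)
    (π : Fin k → ((Fin n → ℝ) →ₗ[ℝ] (Fin n → ℝ)))
    (hsum : ∀ v, ∑ j, π j v = v)
    (heig : ∀ (j) (v), X.mulVec (π j v) = lam j • π j v)
    (horth : ∀ j l, j ≠ l → ∀ v, π j (π l v) = 0)
    (g : Matrix (Fin n) (Fin n) ℝ) (hcomm : g * X = X * g)
    (v : Fin s → (Fin n → ℝ))
    (hthick : ∀ j : Fin k,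
      Module.finrank ℝ (LinearMap.range (π j)) < s ∧
      ∀ I : Finset (Fin s), I.card = Module.finrank ℝ (LinearMap.range (π j)) →
        LinearIndependent ℝ (fun i : I => π j (v i)))
    (t : Fin s → ℝ)
    (hgv : ∀ i, g.mulVec (v i) = (NormedSpace.exp (t i • X)).mulVec (v i)) :
    ∃ τ : ℝ, g = NormedSpace.exp (τ • X) := by
  have hX : IsEigenDecomposition (toLin' X) lam π := ⟨hinj, hsum, heig, horth⟩
  have hexp : ∀ τ j w, NormedSpace.exp (τ • X) *ᵥ π j w = Real.exp (τ * lam j) • π j w :=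
    fun τ j w => exp_mulVec_of_mulVec_eq_smul (by rw [smul_mulVec, heig, smul_smul])
  have hproj : ∀ A, Commute A X → ∀ j w, π j (A *ᵥ w) = A *ᵥ π j w :=
    fun A hA => hX.proj_apply_of_commute (A := toLin' A) (hA.map toLinAlgEquiv')
  have hgπ : ∀ j i, g *ᵥ π j (v i) = Real.exp (t i * lam j) • π j (v i) := fun j i => by
    rw [← hproj g hcomm, hgv, hproj _ ((Commute.refl X).smul_right _).exp_right.symm, hexp]
  have hthick' : ∀ j, IsThick (LinearMap.range (π j)) fun i => π j (v i) := fun j =>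
    ⟨by simpa using (hthick j).1, fun i => LinearMap.mem_range_self _ _, (hthick j).2⟩
  obtain ⟨τ, hτ⟩ : ∃ τ : ℝ, ∀ j, LinearMap.range (π j) ≤
      Module.End.eigenspace (toLin' g) (Real.exp (τ * lam j)) := by
    rcases s.eq_zero_or_pos with rfl | hs
    · exact ⟨0, fun j => absurd (hthick j).1 (Nat.not_lt_zero _)⟩
    · exact ⟨t ⟨0, hs⟩, fun j => (hthick' j).le_eigenspace (f := toLin' g) (hgπ j) ⟨0, hs⟩⟩
  refine ⟨τ, toLin'.injective (hX.ext fun j w => ?_)⟩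
  rw [Module.End.mem_eigenspace_iff.mp (hτ j (LinearMap.mem_range_self _ w)), toLin'_apply, hexp]

/-- let `X` be a diagonalizable endomorphism of `V = ℝⁿ` with eigenvalue
decomposition `V = V_1 ⊕ ... ⊕ V_k` (eigenvalues `lam j`, projections `π j`), and let
`g` be an invertible linear map commuting with `X`.  If `v_1, ..., v_s` is a thick
collection of vectors (each projection `π j` of the family is thick in `V_j`) and
`g v_i = e^{t_i X} v_i` for some reals `t_i`, then `g = e^{t X}` for some `t ∈ ℝ`. -/
theorem stmt11 (n k s : ℕ) (X : Matrix (Fin n) (Fin n) ℝ)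
    (lam : Fin k → ℝ) (hinj : Function.Injective lam)
    (π : Fin k → ((Fin n → ℝ) →ₗ[ℝ] (Fin n → ℝ)))
    (hsum : ∀ v, ∑ j, π j v = v)
    (heig : ∀ (j) (v), X.mulVec (π j v) = lam j • π j v)
    (horth : ∀ j l, j ≠ l → ∀ v, π j (π l v) = 0)
    (g : Matrix (Fin n) (Fin n) ℝ) (hgu : IsUnit g) (hcomm : g * X = X * g)
    (v : Fin s → (Fin n → ℝ))
    (hthick : ∀ j : Fin k,
      Module.finrank ℝ (LinearMap.range (π j)) < s ∧
      ∀ I : Finset (Fin s), I.card = Module.finrank ℝ (LinearMap.range (π j)) →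
        LinearIndependent ℝ (fun i : I => π j (v i)))
    (t : Fin s → ℝ)
    (hgv : ∀ i, g.mulVec (v i) = (NormedSpace.exp (t i • X)).mulVec (v i)) :
    ∃ τ : ℝ, g = NormedSpace.exp (τ • X) :=
  stmt11_general n k s X lam hinj π hsum heig horth g hcomm v hthick t hgv
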